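/- Let I = (L(u,v)) be a lexsegment ideal, with u = x_1x_{l+1}^{a_{l+1}}···x_n^{a_n} and v = x_l·x_n^{d-1} for some 2 ≤ l ≤ n-1 (the shape of a non-completely lexsegment ideal with linear resolution). Then the monomial m = x_l^d·u/x_1 satisfies m ∉ I^2 and x_i·m ∈ I^2 for all 1 ≤ i ≤ n; hence (x_1,...,x_n) ∈ Ass(S/I^2) and depth(S/I^2) = 0. -/

import Mathlib

/-!
The monomial `m = x_l^d u / x_1` has degree `2d - 1`, while `I²` is generated in degree `2d`,
so `m ∉ I²`. On the other hand `x_1 m = x_l^d · u` and `x_i m = (x_i x_l^(d-1)) · (x_l u / x_1)`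
for `i ≠ 1`, and every factor lies in `L(u,v)`: it has degree `d`, it is `≤_lex u` because it is
`u` or has `x_1`-exponent `0`, and it is `≥_lex v = x_l x_n^(d-1)` because it is divisible by `x_l`.
So the class of `m` in `S/I²` is a nonzero element killed by `𝔪 = (x_1, …, x_n)`; hence `𝔪` is an
associated prime and no element of `𝔪` is regular on `S/I²`.
-/

open MvPolynomial

noncomputable section

namespace LexPaper

/-- total degree of an exponent vector -/
def deg {sigma : Type*} (a : sigma  →₀  ℕ) : ℕ := a.sum fun _ e => e

/-- the monomial x^a as an element of the polynomial ring -/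
def mon (k : Type*) [Field k] {sigma : Type*} (a : sigma  →₀  ℕ) : MvPolynomial sigma k :=
  MvPolynomial.monomial a 1

/-- `lexLe a b` : a ≤_lex b, where x_1 > x_2 > ... > x_n (index 0 is the largest variable). -/
def lexLe {n : ℕ} (a b : Fin n  →₀  ℕ) : Prop := toLex a ≤ toLex b

/-- `lexLt a b` : a <_lex b. -/
def lexLt {n : ℕ} (a b : Fin n  →₀  ℕ) : Prop := toLex a < toLex b

/-- the lexsegment set L(u,v) : all exponent vectors of degree d between v and u in lex order -/
def lexSeg {n : ℕ} (d : ℕ) (u v : Fin n  →₀  ℕ) : Set (Fin n  →₀  ℕ) :=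
  {m | deg m = d  ∧  lexLe v m  ∧  lexLe m u}

/-- the lexsegment ideal (L(u,v)) -/
def lexIdeal (k : Type*) [Field k] {n : ℕ} (d : ℕ) (u v : Fin n  →₀  ℕ) :
    Ideal (MvPolynomial (Fin n) k) :=
  Ideal.span (mon k '' lexSeg d u v)

/-- the maximal graded ideal (x_1, ..., x_n) -/
def mMax (k : Type*) [Field k] (n : ℕ) : Ideal (MvPolynomial (Fin n) k) :=
  Ideal.span (Set.range (X : Fin n -> MvPolynomial (Fin n) k))

/-- depth of S/I: the supremum of lengths of regular sequences on S/I consisting of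
elements of the maximal graded ideal -/
def quotDepth (k : Type*) [Field k] {n : ℕ} (I : Ideal (MvPolynomial (Fin n) k)) : ℕ :=
  sSup {r : ℕ | ∃ rs : List (MvPolynomial (Fin n) k), rs.length = r  ∧ 
    (∀ x ∈ rs, x ∈ mMax k n)  ∧  RingTheory.Sequence.IsRegular (MvPolynomial (Fin n) k ⧸ I) rs}


open scoped Pointwise

lemma deg_eq_degree {σ : Type*} (a : σ →₀ ℕ) : deg a = a.degree := rfl

lemma deg_add {σ : Type*} (a b : σ →₀ ℕ) : deg (a + b) = deg a + deg b := by
  simp [deg_eq_degree]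

lemma deg_single {σ : Type*} (i : σ) (c : ℕ) : deg (Finsupp.single i c) = c := by
  simp [deg_eq_degree]

lemma deg_le_deg_of_le {σ : Type*} {a b : σ →₀ ℕ} (h : a ≤ b) : deg a ≤ deg b := by
  rw [← add_tsub_cancel_of_le h, deg_add]
  exact Nat.le_add_right _ _

lemma mon_add (k : Type*) [Field k] {σ : Type*} (a b : σ →₀ ℕ) :
    mon k (a + b) = mon k a * mon k b := by
  simp [mon, monomial_mul]

lemma lexLe_of_apply_lt {n : ℕ} {z : Fin n} (hz : ∀ j, z ≤ j) {a b : Fin n →₀ ℕ}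
    (h : a z < b z) : lexLe a b :=
  (Finsupp.Lex.lt_iff.mpr ⟨z, fun j hj => absurd (hz j) (not_le.mpr hj), h⟩).le

lemma single_add_single_lexLe_of_apply_pos {n d : ℕ} {p q : Fin n} (hpq : p < q)
    (hq : ∀ j, j ≤ q) {w : Fin n →₀ ℕ} (hw : deg w = d) (hwp : 0 < w p) :
    lexLe (Finsupp.single p 1 + Finsupp.single q (d - 1)) w := by
  set v := Finsupp.single p 1 + Finsupp.single q (d - 1)
  have hvp : v p = 1 := by simp [v, hpq.ne']
  have hvq : v q = d - 1 := by simp [v, hpq.ne]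
  refine not_lt.mp fun hlt => ?_
  obtain ⟨i, heq, hi⟩ := Finsupp.Lex.lt_iff.mp hlt
  simp only [ofLex_toLex] at heq hi
  have hi_pq : i = p ∨ i = q := by
    by_contra! h
    simp [v, Ne.symm h.1, Ne.symm h.2] at hi
  obtain rfl | rfl := hi_pq
  · omega
  · -- `w` agrees with `v` below the last index and is smaller there, so it has smaller degree.
    have hdeg : deg w < deg v := by
      simp only [deg_eq_degree, Finsupp.degree_eq_sum]
      exact Finset.sum_lt_sum (fun j _ => ((hq j).lt_or_eq.elim (fun h => (heq j h).le)
        (fun h => h ▸ hi.le))) ⟨i, Finset.mem_univ _, hi⟩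
    have : deg v = d := by simp only [v, deg_add, deg_single]; omega
    omega

lemma mem_lexSeg_of_apply_pos {n d : ℕ} {z p q : Fin n} (hz : ∀ j, z ≤ j) (hpq : p < q)
    (hq : ∀ j, j ≤ q) {u w : Fin n →₀ ℕ} (huz : 0 < u z) (hw : deg w = d) (hwz : w z = 0)
    (hwp : 0 < w p) :
    w ∈ lexSeg d u (Finsupp.single p 1 + Finsupp.single q (d - 1)) :=
  ⟨hw, single_add_single_lexLe_of_apply_pos hpq hq hw hwp, lexLe_of_apply_lt hz (hwz ▸ huz)⟩

section Ideal

variable {k : Type*} [Field k] {n d : ℕ} {u v : Fin n →₀ ℕ}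

lemma mon_mem_lexIdeal {w : Fin n →₀ ℕ} (hw : w ∈ lexSeg d u v) :
    mon k w ∈ lexIdeal k d u v :=
  Ideal.subset_span ⟨w, hw, rfl⟩

lemma mon_add_mem_lexIdeal_sq {a b : Fin n →₀ ℕ} (ha : a ∈ lexSeg d u v)
    (hb : b ∈ lexSeg d u v) : mon k (a + b) ∈ lexIdeal k d u v ^ 2 := by
  rw [mon_add, sq]
  exact Ideal.mul_mem_mul (mon_mem_lexIdeal ha) (mon_mem_lexIdeal hb)

lemma lexIdeal_sq_eq_span :
    lexIdeal k d u v ^ 2 = Ideal.span (mon k '' (lexSeg d u v + lexSeg d u v)) := by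
  rw [sq, lexIdeal, Ideal.span_mul_span', ← Set.image2_mul, Set.image2_image_left,
    Set.image2_image_right, ← Set.image2_add, Set.image_image2]
  simp only [mon_add]

lemma two_mul_le_deg_of_mon_mem_lexIdeal_sq {w : Fin n →₀ ℕ}
    (hw : mon k w ∈ lexIdeal k d u v ^ 2) : 2 * d ≤ deg w := by
  rw [lexIdeal_sq_eq_span] at hw
  unfold mon at hw
  rw [mem_ideal_span_monomial_image] at hw
  obtain ⟨_, ⟨a, ha, b, hb, rfl⟩, hle⟩ := hw w (by simp)
  have := deg_le_deg_of_le hle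
  rw [deg_add, ha.1, hb.1] at this
  omega

end Ideal

lemma mem_associatedPrimes_quotient {R : Type*} [CommRing R] {J 𝔪 : Ideal R} (h𝔪 : 𝔪.IsMaximal)
    {f : R} (hf : f ∉ J) (hann : ∀ x ∈ 𝔪, x * f ∈ J) : 𝔪 ∈ associatedPrimes R (R ⧸ J) := by
  have hcolon : 𝔪 = (⊥ : Submodule R (R ⧸ J)).colon {Ideal.Quotient.mk J f} := by
    refine h𝔪.eq_of_le (fun h => hf ?_) fun x hx => ?_
    · have := Submodule.mem_colon_singleton.mp (h ▸ Submodule.mem_top : (1 : R) ∈ _)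
      rwa [one_smul, Submodule.mem_bot, Ideal.Quotient.eq_zero_iff_mem] at this
    · rw [Submodule.mem_colon_singleton, Submodule.mem_bot, Algebra.smul_def,
        Ideal.Quotient.algebraMap_eq, ← map_mul, Ideal.Quotient.eq_zero_iff_mem]
      exact hann x hx
  exact ⟨h𝔪.isPrime, _, by rw [← hcolon, h𝔪.isPrime.radical]⟩

lemma mem_mMax_iff {k : Type*} [Field k] {n : ℕ} {f : MvPolynomial (Fin n) k} :
    f ∈ mMax k n ↔ constantCoeff f = 0 := by
  rw [mMax, ← Set.image_univ, mem_ideal_span_X_image, constantCoeff_eq]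
  refine ⟨fun h => not_not.mp fun h0 => ?_, fun h m hm => ?_⟩
  · obtain ⟨i, -, hi⟩ := h 0 (mem_support_iff.mpr h0)
    simp at hi
  · obtain ⟨i, hi⟩ := Finsupp.ne_iff.mp (ne_of_mem_of_not_mem hm (notMem_support_iff.mpr h))
    exact ⟨i, Set.mem_univ i, by simpa using hi⟩

lemma mMax_isMaximal (k : Type*) [Field k] (n : ℕ) : (mMax k n).IsMaximal := by
  have : mMax k n = RingHom.ker (constantCoeff : MvPolynomial (Fin n) k →+* k) := by
    ext f
    rw [mem_mMax_iff, RingHom.mem_ker]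
  rw [this]
  exact RingHom.ker_isMaximal_of_surjective _ fun c => ⟨C c, constantCoeff_C _ c⟩

lemma quotDepth_eq_zero {k : Type*} [Field k] {n : ℕ} {I : Ideal (MvPolynomial (Fin n) k)}
    {f : MvPolynomial (Fin n) k} (hf : f ∉ I) (hann : ∀ x ∈ mMax k n, x * f ∈ I) :
    quotDepth k I = 0 := by
  refine Nat.le_zero.mp (csSup_le' ?_)
  rintro _ ⟨_ | ⟨x, rs⟩, rfl, hmem, hreg⟩
  · rfl
  · have hx : x • Ideal.Quotient.mk I f = x • 0 := by
      rw [smul_zero]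
      exact Ideal.Quotient.eq_zero_iff_mem.mpr (hann x (hmem x List.mem_cons_self))
    have := ((RingTheory.Sequence.isRegular_cons_iff _ _ _).mp hreg).1 hx
    exact absurd (Ideal.Quotient.eq_zero_iff_mem.mp this) hf

lemma mul_mem_of_X_mul_mem {k : Type*} [Field k] {n : ℕ} {I : Ideal (MvPolynomial (Fin n) k)}
    {f : MvPolynomial (Fin n) k} (h : ∀ i, X i * f ∈ I) : ∀ x ∈ mMax k n, x * f ∈ I := by
  have : mMax k n ≤ (I : Submodule _ _).colon {f} :=
    Ideal.span_le.mpr (Set.range_subset_iff.mpr fun i => Submodule.mem_colon_singleton.mpr (h i))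
  exact fun x hx => Submodule.mem_colon_singleton.mp (this hx)

section Socle

variable {k : Type*} [Field k] {n d : ℕ} {z p q : Fin n} {u : Fin n →₀ ℕ}

lemma mon_single_add_tsub_notMem_lexIdeal_sq (v : Fin n →₀ ℕ) (hu : deg u = d)
    (huz : 0 < u z) :
    mon k (Finsupp.single p d + u - Finsupp.single z 1) ∉ lexIdeal k d u v ^ 2 := by
  intro h
  have hle : Finsupp.single z 1 ≤ Finsupp.single p d + u :=
    (Finsupp.single_le_iff.mpr huz).trans le_add_self
  have := congrArg deg (tsub_add_cancel_of_le hle)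
  rw [deg_add, deg_add, deg_single, deg_single, hu] at this
  have := two_mul_le_deg_of_mon_mem_lexIdeal_sq h
  omega

lemma X_mul_mon_single_add_tsub_mem_lexIdeal_sq (hz : ∀ j, z ≤ j) (hzp : z < p) (hpq : p < q)
    (hq : ∀ j, j ≤ q) (hd : 2 ≤ d) (hu : deg u = d) (huz : u z = 1)
    (huv : lexLe (Finsupp.single p 1 + Finsupp.single q (d - 1)) u) (i : Fin n) :
    X i * mon k (Finsupp.single p d + u - Finsupp.single z 1) ∈
      lexIdeal k d u (Finsupp.single p 1 + Finsupp.single q (d - 1)) ^ 2 := by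
  set u' := u - Finsupp.single z 1
  have hle : Finsupp.single z 1 ≤ u := Finsupp.single_le_iff.mpr huz.ge
  have hu' : u' + Finsupp.single z 1 = u := tsub_add_cancel_of_le hle
  have hu'z : u' z = 0 := by simp [u', huz]
  have hdeg : deg u' = d - 1 := by
    have := congrArg deg hu'
    rw [deg_add, deg_single, hu] at this
    omega
  have hseg (w : Fin n →₀ ℕ) (hw : deg w = d) (hwz : w z = 0) (hwp : 0 < w p) :=
    mem_lexSeg_of_apply_pos hz hpq hq (huz ▸ one_pos) hw hwz hwp
  rw [add_tsub_assoc_of_le hle]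
  change mon k (Finsupp.single i 1) * _ ∈ _
  rw [← mon_add]
  by_cases hi : i = z
  · -- `x_1 m = x_l^d u`
    have hprod : Finsupp.single z 1 + (Finsupp.single p d + u') = Finsupp.single p d + u := by
      rw [← hu']; abel
    rw [hi, hprod]
    refine mon_add_mem_lexIdeal_sq ?_ ⟨hu, huv, le_rfl⟩
    exact hseg _ (deg_single _ _) (by simp [hzp.ne]) (by simp only [Finsupp.single_eq_same]; omega)
  · -- `x_i m = (x_i x_l^(d-1)) (x_l u / x_1)`
    have hsplit : Finsupp.single i 1 + (Finsupp.single p d + u') =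
        (Finsupp.single i 1 + Finsupp.single p (d - 1)) + (Finsupp.single p 1 + u') := by
      rw [← Nat.sub_add_cancel (by omega : 1 ≤ d), Finsupp.single_add, Nat.add_sub_cancel]
      abel
    rw [hsplit]
    refine mon_add_mem_lexIdeal_sq (hseg _ ?_ ?_ ?_) (hseg _ ?_ ?_ ?_)
    · rw [deg_add, deg_single, deg_single]; omega
    · simp [hzp.ne, Ne.symm hi]
    · rw [Finsupp.add_apply, Finsupp.single_eq_same]; omega
    · rw [deg_add, deg_single, hdeg]; omega
    · simp [hzp.ne, hu'z]
    · simp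

end Socle

theorem statement14 {k : Type*} [Field k] {n d l : ℕ} (hd : 2 ≤ d)
    (hl2 : 2 ≤ l) (hln : l ≤ n - 1)
    (u v : Fin n →₀ ℕ) (hu : deg u = d) (huv : lexLe v u)
    (hnu1 : u (⟨0, by omega⟩ : Fin n) = 1)
    (hveq : v = Finsupp.single (⟨l-1, by omega⟩ : Fin n) 1 + Finsupp.single (⟨n-1, by omega⟩ : Fin n) (d-1)) :
    mon k (Finsupp.single (⟨l-1, by omega⟩ : Fin n) d + u - Finsupp.single (⟨0, by omega⟩ : Fin n) 1)
        ∉ (lexIdeal k d u v) ^ 2 ∧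
    (∀ i : Fin n, X i * mon k (Finsupp.single (⟨l-1, by omega⟩ : Fin n) d + u - Finsupp.single (⟨0, by omega⟩ : Fin n) 1)
        ∈ (lexIdeal k d u v) ^ 2) ∧
    mMax k n ∈ associatedPrimes (MvPolynomial (Fin n) k) (MvPolynomial (Fin n) k ⧸ ((lexIdeal k d u v) ^ 2)) ∧
    quotDepth k ((lexIdeal k d u v) ^ 2) = 0 := by
  have hnot := mon_single_add_tsub_notMem_lexIdeal_sq (k := k) (p := ⟨l - 1, by omega⟩) v hu
    (hnu1 ▸ one_pos)
  subst hveq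
  have hz : ∀ j : Fin n, (⟨0, by omega⟩ : Fin n) ≤ j := fun j => Fin.mk_le_mk.mpr (Nat.zero_le _)
  have hq : ∀ j : Fin n, j ≤ ⟨n - 1, by omega⟩ := fun j => Fin.mk_le_mk.mpr (by omega)
  have hX := X_mul_mon_single_add_tsub_mem_lexIdeal_sq (k := k) hz (Fin.mk_lt_mk.mpr (by omega))
    (Fin.mk_lt_mk.mpr (by omega)) hq hd hu hnu1 huv
  have hann := mul_mem_of_X_mul_mem hX
  exact ⟨hnot, hX, mem_associatedPrimes_quotient (mMax_isMaximal k n) hnot hann,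
    quotDepth_eq_zero hnot hann⟩

end LexPaper
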